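/- Let γ < 0 and define c(γ) = (1-γ)·(Γ(1-γ))^{1/γ}. Then e^{γ*} ≤ c(γ) ≤ e for all γ < 0, where γ* is the Euler–Mascheroni constant; moreover lim_{γ → 0⁻} c(γ) = e^{γ*} and lim_{γ → -∞} c(γ) = e. -/

import Mathlib

/-!
Put `x = 1 - γ > 1`, so that `log c(γ) = log x - log Γ(x) / (x - 1)`. Everything follows from four
bounds on `log Γ(x)`:
* `log Γ(x) ≤ (x - 1)(log x - γ*)`, from Euler's limit formula, gives `c(γ) ≥ e^γ*`;
* `log Γ(x) ≥ (x - 1)(log x - 1)`, from the Gamma integral and Bernoulli's inequality, gives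
  `c(γ) ≤ e`;
* `log Γ(x) ≥ -γ*(x - 1)`, the tangent at `1` of the convex function `log Γ`, squeezes `log c(γ)`
  to `γ*` as `γ → 0⁻`;
* `log Γ(x) ≤ x log x - x + log x + 2`, from the monotonicity of `Γ` on `[2, ∞)` and Stirling's
  upper bound for `⌊x⌋!`, squeezes `log c(γ)` to `1` as `γ → -∞`.
-/

open Real Filter Set Topology MeasureTheory
open scoped Nat

lemma monotoneOn_sub_log_one_add : MonotoneOn (fun u : ℝ => u - log (1 + u)) (Ici 0) := by
  intro u hu v _ huv
  have hu1 : 0 < 1 + u := by linarith [mem_Ici.mp hu]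
  have hlog : log ((1 + v) / (1 + u)) ≤ v - u := by
    calc log ((1 + v) / (1 + u)) ≤ (1 + v) / (1 + u) - 1 :=
          log_le_sub_one_of_pos (div_pos (by linarith) hu1)
      _ = (v - u) / (1 + u) := by field_simp; ring
      _ ≤ v - u := div_le_self (by linarith) (by linarith [mem_Ici.mp hu])
  rw [log_div (by linarith) hu1.ne'] at hlog
  linarith

section TailPrimitive

variable {a : ℝ}

/-- An antiderivative of `t ↦ a / t - log (1 + a / t)` on `(0, ∞)`. -/
noncomputable def tailPrimitive (a t : ℝ) : ℝ := (t + a) * (log t - log (t + a))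

lemma log_one_add_div {t : ℝ} (ht : 0 < t) (hta : 0 < t + a) :
    log (1 + a / t) = log (t + a) - log t := by
  rw [← log_div hta.ne' ht.ne']
  congr 1
  field_simp

lemma hasDerivAt_tailPrimitive (ha : 0 ≤ a) {t : ℝ} (ht : 0 < t) :
    HasDerivAt (tailPrimitive a) (a / t - log (1 + a / t)) t := by
  have hta : 0 < t + a := by linarith
  have h : HasDerivAt (tailPrimitive a)
      (1 * (log t - log (t + a)) + (t + a) * (t⁻¹ - 1 / (t + a))) t :=
    ((hasDerivAt_id t).add_const a).mul
      ((hasDerivAt_log ht.ne').sub (((hasDerivAt_id t).add_const a).log hta.ne'))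
  rw [log_one_add_div ht hta]
  convert h using 1
  field_simp
  ring

lemma tailPrimitive_le_neg (ha : 0 ≤ a) {t : ℝ} (ht : 0 < t) : tailPrimitive a t ≤ -a := by
  have hta : 0 < t + a := by linarith
  have h := one_sub_inv_le_log_of_pos (div_pos hta ht)
  rw [log_div hta.ne' ht.ne', inv_div] at h
  have : 1 - t / (t + a) = a / (t + a) := by field_simp; ring
  rw [this, div_le_iff₀ hta] at h
  unfold tailPrimitive
  nlinarith

lemma sub_log_one_add_div_le_tailPrimitive_sub (ha : 0 ≤ a) {s : ℝ} (hs : 0 < s) :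
    a / (s + 1) - log (1 + a / (s + 1)) ≤ tailPrimitive a (s + 1) - tailPrimitive a s := by
  obtain ⟨c, ⟨hsc, hcs⟩, hc⟩ := exists_hasDerivAt_eq_slope (tailPrimitive a)
    (fun t => a / t - log (1 + a / t)) (lt_add_one s)
    (fun t ht => (hasDerivAt_tailPrimitive ha (hs.trans_le ht.1)).continuousAt.continuousWithinAt)
    (fun t ht => hasDerivAt_tailPrimitive ha (hs.trans ht.1))
  rw [add_sub_cancel_left, div_one] at hc
  rw [← hc]
  exact monotoneOn_sub_log_one_add (div_nonneg ha (by linarith)) (div_nonneg ha (by linarith))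
    (div_le_div_of_nonneg_left ha (by linarith) hcs.le)

/-- Comparing the series with the integral of its (decreasing) general term. -/
lemma sum_sub_log_one_add_div_le (ha : 0 ≤ a) (n : ℕ) :
    ∑ j ∈ Finset.range n, (a / (j + 1) - log (1 + a / (j + 1))) ≤ a * log (1 + a) := by
  have telescope : ∀ n : ℕ, ∑ j ∈ Finset.range (n + 1), (a / (j + 1) - log (1 + a / (j + 1)))
      ≤ a - log (1 + a) + tailPrimitive a (n + 1) - tailPrimitive a 1 := by
    intro n
    induction n with
    | zero => simp
    | succ n ih =>
      rw [Finset.sum_range_succ]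
      have := sub_log_one_add_div_le_tailPrimitive_sub ha (s := n + 1) (by positivity)
      push_cast at this ⊢
      linarith
  rcases n with _ | n
  · simp only [Finset.range_zero, Finset.sum_empty]
    exact mul_nonneg ha (log_nonneg (by linarith))
  · have h1 : tailPrimitive a 1 = -((1 + a) * log (1 + a)) := by
      simp [tailPrimitive]
    have := tailPrimitive_le_neg ha (t := n + 1) (by positivity)
    linarith [telescope n]

end TailPrimitive

lemma sum_range_log_add_one (n : ℕ) :
    ∑ m ∈ Finset.range n, log ((m : ℝ) + 1) = log n ! := by
  rw [← log_prod (fun m _ => by positivity), ← Finset.prod_range_add_one_eq_factorial]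
  push_cast
  rfl

lemma logGammaSeq_one_add {a : ℝ} (ha : -1 < a) (n : ℕ) :
    BohrMollerup.logGammaSeq (1 + a) n
      = (1 + a) * log n - log (n + 1) - ∑ j ∈ Finset.range (n + 1), log (1 + a / (j + 1)) := by
  have hsplit : ∀ m : ℕ, log (1 + a + m) = log ((m : ℝ) + 1) + log (1 + a / (m + 1)) := by
    intro m
    rw [log_one_add_div (by positivity) (by linarith [(m.cast_nonneg : (0 : ℝ) ≤ m)])]
    ring_nf
  have hfact : log (n + 1 : ℕ) ! = log n ! + log (n + 1) := by
    rw [Nat.factorial_succ, Nat.cast_mul, log_mul (by positivity) (by positivity)]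
    push_cast
    ring
  simp only [BohrMollerup.logGammaSeq, hsplit, Finset.sum_add_distrib, sum_range_log_add_one, hfact]
  ring

/-- Writing `log (1 + u) = u - (u - log (1 + u))` in `logGammaSeq_one_add` turns the sum into
`a H_{n+1}` minus a series that is at most `a log (1 + a)`; let `n → ∞` (Euler's limit formula). -/
lemma log_Gamma_le_mul_log_sub_eulerMascheroniConstant {x : ℝ} (hx : 1 ≤ x) :
    log (Gamma x) ≤ (x - 1) * (log x - eulerMascheroniConstant) := by
  set a := x - 1
  have hx' : x = 1 + a := by ring
  have hbound : ∀ n : ℕ, BohrMollerup.logGammaSeq x n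
      ≤ a * log x - a * (harmonic (n + 1) - log (n + 1)) - x * (log (n + 1) - log n) := by
    intro n
    have hharm : a * (harmonic (n + 1) : ℝ) = ∑ j ∈ Finset.range (n + 1), a / ((j : ℝ) + 1) := by
      simp [harmonic, Finset.mul_sum, div_eq_mul_inv]
    have htail := sum_sub_log_one_add_div_le (a := a) (by linarith) (n + 1)
    rw [Finset.sum_sub_distrib, ← hharm, ← hx'] at htail
    rw [hx', logGammaSeq_one_add (by linarith), ← hx']
    linarith
  have hlim : Tendsto (fun n : ℕ => a * log x - a * (harmonic (n + 1) - log (n + 1))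
      - x * (log (n + 1) - log n)) atTop (𝓝 (a * log x - a * eulerMascheroniConstant - x * 0)) := by
    have hγ : Tendsto (fun n : ℕ => (harmonic (n + 1) : ℝ) - log ((n + 1 : ℕ) : ℝ)) atTop
        (𝓝 eulerMascheroniConstant) :=
      tendsto_harmonic_sub_log.comp (tendsto_add_atTop_nat 1)
    push_cast at hγ
    exact (tendsto_const_nhds.sub (hγ.const_mul a)).sub (tendsto_log_nat_add_one_sub_log.const_mul x)
  have := le_of_tendsto_of_tendsto' (BohrMollerup.tendsto_log_gamma (by linarith)) hlim hbound
  linarith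

/-- Bernoulli's inequality `(t / x) ^ x ≥ 1 + t - x` compares the Gamma integrand with that of
`∫ t ^ (x - 1) exp (-(t / x) ^ x) dt`, which is computed in closed form. -/
lemma rpow_mul_exp_le_Gamma {x : ℝ} (hx : 1 ≤ x) :
    x ^ (x - 1) * exp (1 - x) ≤ Gamma x := by
  have hx0 : 0 < x := by linarith
  set b := x ^ (-x) with hb
  have hb0 : 0 < b := rpow_pos_of_pos hx0 _
  have hcomparison : ∫ t in Ioi (0 : ℝ), t ^ (x - 1) * exp (-b * t ^ x)
      = x ^ (x - 1) := by
    rw [integral_rpow_mul_exp_neg_mul_rpow hx0 (by linarith) hb0, sub_add_cancel, div_self hx0.ne',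
      Gamma_one, hb, ← rpow_mul hx0.le, rpow_sub hx0, rpow_one]
    field_simp
  have hpointwise : ∀ t ∈ Ioi (0 : ℝ),
      exp (1 - x) * (t ^ (x - 1) * exp (-b * t ^ x)) ≤ exp (-t) * t ^ (x - 1) := by
    intro t ht
    have hbernoulli := one_add_mul_self_le_rpow_one_add (s := t / x - 1)
      (by linarith [div_pos (mem_Ioi.mp ht) hx0]) hx
    rw [add_sub_cancel, div_rpow (le_of_lt ht) hx0.le] at hbernoulli
    have : 1 - x - b * t ^ x ≤ -t := by
      have : x * (t / x - 1) = t - x := by field_simp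
      rw [hb, rpow_neg hx0.le, ← div_eq_inv_mul]
      linarith
    calc exp (1 - x) * (t ^ (x - 1) * exp (-b * t ^ x))
        = t ^ (x - 1) * exp (1 - x - b * t ^ x) := by rw [sub_eq_add_neg _ (b * _), exp_add]; ring_nf
      _ ≤ exp (-t) * t ^ (x - 1) := by
        rw [mul_comm]
        have := rpow_nonneg (le_of_lt ht) (x - 1)
        gcongr
  calc x ^ (x - 1) * exp (1 - x)
      = ∫ t in Ioi (0 : ℝ), exp (1 - x) * (t ^ (x - 1) * exp (-b * t ^ x)) := by
        rw [integral_const_mul, hcomparison, mul_comm]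
    _ ≤ ∫ t in Ioi (0 : ℝ), exp (-t) * t ^ (x - 1) :=
        setIntegral_mono_on
          ((integrableOn_rpow_mul_exp_neg_mul_rpow (by linarith) hx0 hb0).const_mul _)
          (GammaIntegral_convergent hx0) measurableSet_Ioi hpointwise
    _ = Gamma x := (Gamma_eq_integral hx0).symm

lemma neg_eulerMascheroniConstant_mul_le_log_Gamma {x : ℝ} (hx : 1 < x) :
    -eulerMascheroniConstant * (x - 1) ≤ log (Gamma x) := by
  have hderiv : HasDerivAt (log ∘ Gamma) (-eulerMascheroniConstant) 1 := by
    simpa [Gamma_one, Function.comp_def] using hasDerivAt_Gamma_one.log (by simp)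
  have hslope := convexOn_log_Gamma.le_slope_of_hasDerivAt (mem_Ioi.2 one_pos)
    (mem_Ioi.2 (by linarith)) hx hderiv
  rwa [slope_def_field, Function.comp_apply, Function.comp_apply, Gamma_one, log_one, sub_zero,
    le_div_iff₀ (by linarith)] at hslope

lemma log_factorial_le_stirling {n : ℕ} (hn : n ≠ 0) :
    log n ! ≤ n * log n - n + log n / 2 + 1 := by
  obtain ⟨m, rfl⟩ := Nat.exists_eq_succ_of_ne_zero hn
  have hanti := Stirling.log_stirlingSeq'_antitone (Nat.zero_le m)
  simp only [Function.comp_apply, Nat.succ_eq_add_one, zero_add, Stirling.stirlingSeq_one,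
    Stirling.log_stirlingSeq_formula] at hanti
  have hm : (0 : ℝ) < (m + 1 : ℕ) := by positivity
  rw [log_div (exp_pos 1).ne' (by positivity), log_exp, log_sqrt (by norm_num),
    log_mul (by norm_num) hm.ne', log_div hm.ne' (exp_pos 1).ne', log_exp] at hanti
  linarith

lemma log_Gamma_le_stirling {x : ℝ} (hx : 2 ≤ x) :
    log (Gamma x) ≤ x * log x - x + log x + 2 := by
  set n := ⌊x⌋₊
  have hn : 2 ≤ n := Nat.le_floor (by exact_mod_cast hx)
  have hnx : (n : ℝ) ≤ x := Nat.floor_le (by linarith)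
  have hxn : x < n + 1 := Nat.lt_floor_add_one x
  have hn0 : (0 : ℝ) < n := by positivity
  have hGamma : Gamma x ≤ n ! := by
    rw [← Gamma_nat_eq_factorial]
    exact Gamma_strictMonoOn_Ici.monotoneOn (mem_Ici.2 hx) (mem_Ici.2 (by linarith)) hxn.le
  have hlog : log n ≤ log x := log_le_log hn0 hnx
  have hlog0 : 0 ≤ log n := log_nonneg (by linarith)
  calc log (Gamma x) ≤ log n ! := log_le_log (Gamma_pos_of_pos (by linarith)) hGamma
    _ ≤ n * log n - n + log n / 2 + 1 := log_factorial_le_stirling (by omega)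
    _ ≤ x * log x - x + log x + 2 := by nlinarith

/-- `log c(γ)`, where `c(γ) = (1 - γ) Γ(1 - γ) ^ (1 / γ)`. -/
noncomputable def logC (γ : ℝ) : ℝ := log (1 - γ) + log (Gamma (1 - γ)) / γ

section logC

variable {γ : ℝ}

lemma one_sub_mul_Gamma_rpow_eq_exp_logC (hγ : γ < 0) :
    (1 - γ) * Gamma (1 - γ) ^ (1 / γ) = exp (logC γ) := by
  have hx : 0 < 1 - γ := by linarith
  rw [rpow_def_of_pos (Gamma_pos_of_pos hx), logC, exp_add, exp_log hx, mul_one_div]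

lemma eulerMascheroniConstant_le_logC (hγ : γ < 0) : eulerMascheroniConstant ≤ logC γ := by
  have h := log_Gamma_le_mul_log_sub_eulerMascheroniConstant (x := 1 - γ) (by linarith)
  have : -(log (1 - γ) - eulerMascheroniConstant) ≤ log (Gamma (1 - γ)) / γ := by
    rw [le_div_iff_of_neg hγ]
    linarith
  unfold logC
  linarith

lemma logC_le_one (hγ : γ < 0) : logC γ ≤ 1 := by
  have hx : 0 < 1 - γ := by linarith
  have h := log_le_log (by positivity) (rpow_mul_exp_le_Gamma (x := 1 - γ) (by linarith))
  rw [log_mul (by positivity) (exp_pos _).ne', log_rpow hx, log_exp] at h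
  have : log (Gamma (1 - γ)) / γ ≤ 1 - log (1 - γ) := by
    rw [div_le_iff_of_neg hγ]
    linarith
  unfold logC
  linarith

lemma logC_le_log_one_sub_add (hγ : γ < 0) :
    logC γ ≤ log (1 - γ) + eulerMascheroniConstant := by
  have h := neg_eulerMascheroniConstant_mul_le_log_Gamma (x := 1 - γ) (by linarith)
  have : log (Gamma (1 - γ)) / γ ≤ eulerMascheroniConstant := by
    rw [div_le_iff_of_neg hγ]
    linarith
  unfold logC
  linarith

lemma one_add_div_le_logC (hγ : γ ≤ -1) : 1 + (2 * log (1 - γ) + 1) / γ ≤ logC γ := by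
  have h := log_Gamma_le_stirling (x := 1 - γ) (by linarith)
  have hγ0 : γ ≠ 0 := by linarith
  have hdiv := div_le_div_of_nonpos_of_le (by linarith : γ ≤ 0) h
  have hsimp : log (1 - γ) + ((1 - γ) * log (1 - γ) - (1 - γ) + log (1 - γ) + 2) / γ
      = 1 + (2 * log (1 - γ) + 1) / γ := by
    field_simp
    ring
  rw [logC, ← hsimp]
  linarith

lemma tendsto_logC_nhdsLT_zero : Tendsto logC (𝓝[<] 0) (𝓝 eulerMascheroniConstant) := by
  have hupper : Tendsto (fun γ => log (1 - γ) + eulerMascheroniConstant) (𝓝[<] 0)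
      (𝓝 eulerMascheroniConstant) := by
    have h : ContinuousAt (fun γ => log (1 - γ) + eulerMascheroniConstant) 0 := by
      fun_prop (disch := norm_num)
    simpa using h.tendsto.mono_left nhdsWithin_le_nhds
  refine tendsto_of_tendsto_of_tendsto_of_le_of_le' tendsto_const_nhds hupper ?_ ?_ <;>
    filter_upwards [self_mem_nhdsWithin] with γ hγ
  exacts [eulerMascheroniConstant_le_logC hγ, logC_le_log_one_sub_add hγ]

lemma tendsto_log_one_sub_div_atBot : Tendsto (fun γ => log (1 - γ) / γ) atBot (𝓝 0) := by
  have hshift : Tendsto (fun γ : ℝ => 1 - γ) atBot atTop := by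
    simpa [sub_eq_add_neg] using tendsto_atTop_add_const_left atBot (1 : ℝ) tendsto_neg_atBot_atTop
  refine ((tendsto_pow_log_div_mul_add_atTop (-1) 1 1 (by norm_num)).comp hshift).congr fun γ => ?_
  simp only [Function.comp_apply, pow_one]
  ring_nf

lemma tendsto_logC_atBot : Tendsto logC atBot (𝓝 1) := by
  have hlower : Tendsto (fun γ => 1 + (2 * log (1 - γ) + 1) / γ) atBot (𝓝 1) := by
    have h := (tendsto_log_one_sub_div_atBot.const_mul 2).add tendsto_inv_atBot_zero
    simp only [mul_zero, add_zero] at h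
    simpa [add_div, mul_div_assoc] using h.const_add 1
  refine tendsto_of_tendsto_of_tendsto_of_le_of_le' hlower tendsto_const_nhds ?_ ?_ <;>
    filter_upwards [eventually_le_atBot (-1)] with γ hγ
  exacts [one_add_div_le_logC hγ, logC_le_one (by linarith)]

end logC

theorem stmt19 :
    (∀ γ : ℝ, γ < 0 →
      (1 - γ) * Real.Gamma (1 - γ) ^ (1/γ)
        ∈ Set.Icc (Real.exp Real.eulerMascheroniConstant) (Real.exp 1)) ∧
    Filter.Tendsto (fun γ : ℝ => (1 - γ) * Real.Gamma (1 - γ) ^ (1/γ))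
      (nhdsWithin 0 (Set.Iio 0)) (nhds (Real.exp Real.eulerMascheroniConstant)) ∧
    Filter.Tendsto (fun γ : ℝ => (1 - γ) * Real.Gamma (1 - γ) ^ (1/γ))
      Filter.atBot (nhds (Real.exp 1)) := by
  refine ⟨fun γ hγ => ?_, ?_, ?_⟩
  · rw [one_sub_mul_Gamma_rpow_eq_exp_logC hγ]
    exact ⟨exp_le_exp.2 (eulerMascheroniConstant_le_logC hγ), exp_le_exp.2 (logC_le_one hγ)⟩
  · refine ((continuous_exp.tendsto _).comp tendsto_logC_nhdsLT_zero).congr' ?_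
    filter_upwards [self_mem_nhdsWithin] with γ hγ
    exact (one_sub_mul_Gamma_rpow_eq_exp_logC hγ).symm
  · refine ((continuous_exp.tendsto _).comp tendsto_logC_atBot).congr' ?_
    filter_upwards [eventually_lt_atBot 0] with γ hγ
    exact (one_sub_mul_Gamma_rpow_eq_exp_logC hγ).symm
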